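/- arXiv:1409.5687 — 7 statements merged into one kernel-verified Lean document; each statement's English description precedes it below -/
import Mathlib

section
/- Let ρ ∈ (0, 1]. Then there exists a positive constant c₁ (depending only on ρ) such that for every real number b ≥ (e/ρ)^ρ, one has ∑_{j=0}^∞ (b / j^ρ)^j ≥ exp(c₁ · b^{1/ρ}), where the j = 0 term of the series is interpreted as 1. (In fact the inequality holds with c₁ = ρ/(2e).) -/
open Filter Topology Real

/-!
With `t = b ^ (1 / ρ) ≥ e / ρ ≥ e`, the single term of index `j = ⌊t / e⌋₊` already suffices:
`j ≤ t / e` gives `b / j ^ ρ = (t / j) ^ ρ ≥ e ^ ρ`, so that term is at least `exp (ρ j)`,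
while `j ≥ t / (2e)`. All terms are nonnegative and eventually below `2⁻ⁿ`.
-/

lemma ite_zero_one_pow {M : Type*} [Monoid M] (x : M) (n : ℕ) :
    (if n = 0 then 1 else x ^ n) = x ^ n := by
  split_ifs with h <;> simp [h]

lemma summable_pow_self_of_tendsto_zero {a : ℕ → ℝ} (ha : Tendsto a atTop (𝓝 0)) :
    Summable fun n ↦ a n ^ n := by
  refine .of_norm_bounded_eventually_nat summable_geometric_two ?_
  filter_upwards [(ha.norm.eventually (gt_mem_nhds (by norm_num : ‖(0 : ℝ)‖ < 1 / 2)))]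
    with n hn
  rw [norm_pow]
  exact pow_le_pow_left₀ (norm_nonneg _) hn.le n

lemma summable_div_rpow_pow (b : ℝ) {ρ : ℝ} (hρ : 0 < ρ) :
    Summable fun n : ℕ ↦ (b / (n : ℝ) ^ ρ) ^ n :=
  summable_pow_self_of_tendsto_zero <|
    tendsto_const_nhds.div_atTop <| (tendsto_rpow_atTop hρ).comp tendsto_natCast_atTop_atTop

lemma half_le_natFloor {x : ℝ} (hx : 1 ≤ x) : x / 2 ≤ ⌊x⌋₊ := by
  have h₁ : (1 : ℝ) ≤ ⌊x⌋₊ := by exact_mod_cast Nat.one_le_floor_iff x |>.mpr hx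
  linarith [Nat.lt_floor_add_one x]

lemma exp_mul_le_rpow_div_rpow_pow {ρ t : ℝ} (hρ : 0 ≤ ρ) {j : ℕ} (hj : 0 < j)
    (hjt : j * exp 1 ≤ t) : exp (ρ * j) ≤ (t ^ ρ / (j : ℝ) ^ ρ) ^ j := by
  have hj' : (0 : ℝ) < j := by exact_mod_cast hj
  have hbase : exp ρ ≤ t ^ ρ / (j : ℝ) ^ ρ := by
    rw [← div_rpow (le_trans (by positivity) hjt) hj'.le, ← exp_one_rpow]
    exact rpow_le_rpow (exp_pos 1).le (by rwa [le_div_iff₀ hj', mul_comm]) hρ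
  rw [mul_comm, exp_nat_mul]
  exact pow_le_pow_left₀ (exp_pos ρ).le hbase j

lemma exists_exp_le_rpow_div_rpow_pow {ρ t : ℝ} (hρ : 0 ≤ ρ) (ht : exp 1 ≤ t) :
    ∃ j : ℕ, exp (ρ / (2 * exp 1) * t) ≤ (t ^ ρ / (j : ℝ) ^ ρ) ^ j := by
  have hx : 1 ≤ t / exp 1 := by rwa [one_le_div (exp_pos 1)]
  refine ⟨⌊t / exp 1⌋₊, le_trans ?_ <| exp_mul_le_rpow_div_rpow_pow hρ
    (Nat.floor_pos.mpr hx) ?_⟩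
  · refine exp_le_exp.mpr ?_
    calc ρ / (2 * exp 1) * t = ρ * (t / exp 1 / 2) := by ring
      _ ≤ ρ * ⌊t / exp 1⌋₊ := mul_le_mul_of_nonneg_left (half_le_natFloor hx) hρ
  · rw [← le_div_iff₀ (exp_pos 1)]
    exact Nat.floor_le (by positivity)

/-- Let `ρ ∈ (0, 1]`. There exists `c₁ > 0` (depending only on `ρ`) such that for every
`b ≥ (e/ρ)^ρ` one has `∑_{j=0}^∞ (b / j^ρ)^j ≥ exp (c₁ * b^(1/ρ))`, where the `j = 0`
term of the series is interpreted as `1`. -/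
theorem sum_pow_lower_bound (ρ : ℝ) (hρ0 : 0 < ρ) (hρ1 : ρ ≤ 1) :
    ∃ c₁ > 0, ∀ b : ℝ, (Real.exp 1 / ρ) ^ ρ ≤ b →
      Real.exp (c₁ * b ^ (1 / ρ)) ≤
        ∑' j : ℕ, (if j = 0 then (1 : ℝ) else (b / (j : ℝ) ^ ρ) ^ j) := by
  refine ⟨ρ / (2 * exp 1), by positivity, fun b hb ↦ ?_⟩
  have hb0 : 0 ≤ b := le_trans (by positivity) hb
  have ht : exp 1 ≤ b ^ (1 / ρ) := calc
    exp 1 ≤ exp 1 / ρ := le_div_self (exp_pos 1).le hρ0 hρ1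
    _ ≤ b ^ (1 / ρ) := by rwa [one_div, le_rpow_inv_iff_of_pos (by positivity) hb0 hρ0]
  obtain ⟨j, hj⟩ := exists_exp_le_rpow_div_rpow_pow hρ0.le ht
  have hbt : (b ^ (1 / ρ)) ^ ρ = b := by rw [one_div, rpow_inv_rpow hb0 hρ0.ne']
  rw [hbt] at hj
  simp_rw [ite_zero_one_pow]
  exact hj.trans <| (summable_div_rpow_pow b hρ0).le_tsum j fun n _ ↦ by positivity
end

section
/- Let ρ ∈ (0, 1]. Then there exist positive constants c₁ and c₂ (depending only on ρ) such that for every real number b > 0, one has ∑_{j=0}^∞ b^j / Γ(jρ + 1) ≤ c₁ · exp(c₂ · b^{1/ρ}). -/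
/-!
Dropping the part of Euler's integral below `c` gives `c ^ x * e^(-c) ≤ Γ(x + 1)` for every
`c ≥ 0`. With `a = b ^ (1 / ρ)` and `c = 2 a` this bounds the `j`-th term
`b ^ j / Γ(jρ + 1) = a ^ (jρ) / Γ(jρ + 1)` by `e^(2a) * 2^(-jρ)`, so the series is dominated by
a geometric one and its sum is at most `e^(2a) / (1 - 2^(-ρ))`.
-/

open Real Set MeasureTheory

lemma Real.rpow_mul_exp_neg_le_Gamma_add_one {c x : ℝ} (hc : 0 ≤ c) (hx : 0 ≤ x) :
    c ^ x * exp (-c) ≤ Gamma (x + 1) := by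
  have hint : IntegrableOn (fun s : ℝ => exp (-s) * s ^ x) (Ioi 0) := by
    simpa using GammaIntegral_convergent (s := x + 1) (by linarith)
  calc c ^ x * exp (-c) = ∫ s in Ioi c, exp (-s) * c ^ x := by
        rw [integral_mul_const, integral_exp_neg_Ioi, mul_comm]
    _ ≤ ∫ s in Ioi c, exp (-s) * s ^ x :=
        setIntegral_mono_on ((integrableOn_exp_neg_Ioi c).mul_const _)
          (hint.mono_set (Ioi_subset_Ioi hc)) measurableSet_Ioi fun s hs =>
          mul_le_mul_of_nonneg_left (rpow_le_rpow hc (le_of_lt hs) hx) (exp_pos _).le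
    _ ≤ ∫ s in Ioi 0, exp (-s) * s ^ x :=
        setIntegral_mono_set hint
          ((ae_restrict_iff' measurableSet_Ioi).2 (ae_of_all _ fun s hs =>
            mul_nonneg (exp_pos _).le (rpow_nonneg (le_of_lt hs) _)))
          (Ioi_subset_Ioi hc).eventuallyLE
    _ = Gamma (x + 1) := by rw [Gamma_eq_integral (by linarith), add_sub_cancel_right]

lemma pow_div_Gamma_mul_add_one_le {ρ b : ℝ} (hρ : 0 < ρ) (hb : 0 ≤ b) (j : ℕ) :
    b ^ j / Gamma (j * ρ + 1) ≤ exp (2 * b ^ (1 / ρ)) * (2 ^ (-ρ)) ^ j := by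
  set a := b ^ (1 / ρ)
  have ha : 0 ≤ a := rpow_nonneg hb _
  have hx : 0 ≤ (j : ℝ) * ρ := by positivity
  have hbj : b ^ j = a ^ ((j : ℝ) * ρ) := by
    rw [← rpow_mul hb, one_div_mul_eq_div, mul_div_cancel_right₀ _ hρ.ne', rpow_natCast]
  have hr : ((2 : ℝ) ^ (-ρ)) ^ j = (2 ^ ((j : ℝ) * ρ))⁻¹ := by
    rw [← rpow_natCast, ← rpow_mul zero_le_two, ← rpow_neg zero_le_two, neg_mul, mul_comm]
  have hΓ := rpow_mul_exp_neg_le_Gamma_add_one (mul_nonneg zero_le_two ha) hx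
  rw [mul_rpow zero_le_two ha] at hΓ
  rw [div_le_iff₀ (Gamma_pos_of_pos (by positivity)), hbj, hr]
  calc a ^ ((j : ℝ) * ρ)
      = exp (2 * a) * (2 ^ ((j : ℝ) * ρ))⁻¹ *
          (2 ^ ((j : ℝ) * ρ) * a ^ ((j : ℝ) * ρ) * exp (-(2 * a))) := by
        rw [exp_neg]; field_simp
    _ ≤ _ := by gcongr

lemma tsum_pow_div_Gamma_mul_add_one_le {ρ b : ℝ} (hρ : 0 < ρ) (hb : 0 ≤ b) :
    ∑' j : ℕ, b ^ j / Gamma (j * ρ + 1) ≤ (1 - 2 ^ (-ρ))⁻¹ * exp (2 * b ^ (1 / ρ)) := by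
  have hr0 : 0 ≤ (2 : ℝ) ^ (-ρ) := rpow_nonneg zero_le_two _
  have hr1 : (2 : ℝ) ^ (-ρ) < 1 := rpow_lt_one_of_one_lt_of_neg one_lt_two (neg_neg_of_pos hρ)
  have hgeom := (summable_geometric_of_lt_one hr0 hr1).mul_left (exp (2 * b ^ (1 / ρ)))
  have hnonneg (j : ℕ) : 0 ≤ b ^ j / Gamma (j * ρ + 1) :=
    div_nonneg (pow_nonneg hb j) (Gamma_pos_of_pos (by positivity)).le
  calc ∑' j : ℕ, b ^ j / Gamma (j * ρ + 1)
      ≤ ∑' j : ℕ, exp (2 * b ^ (1 / ρ)) * (2 ^ (-ρ)) ^ j :=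
        (hgeom.of_nonneg_of_le hnonneg (pow_div_Gamma_mul_add_one_le hρ hb)).tsum_le_tsum
          (pow_div_Gamma_mul_add_one_le hρ hb) hgeom
    _ = (1 - 2 ^ (-ρ))⁻¹ * exp (2 * b ^ (1 / ρ)) := by
        rw [tsum_mul_left, tsum_geometric_of_lt_one hr0 hr1, mul_comm]

theorem sum_div_gamma_upper_bound_general (ρ : ℝ) (hρ0 : 0 < ρ) :
    ∃ c₁ > 0, ∃ c₂ > 0, ∀ b : ℝ, 0 < b →
      (∑' j : ℕ, b ^ j / Real.Gamma ((j : ℝ) * ρ + 1)) ≤ c₁ * Real.exp (c₂ * b ^ (1 / ρ)) := by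
  have hr1 : (2 : ℝ) ^ (-ρ) < 1 := rpow_lt_one_of_one_lt_of_neg one_lt_two (neg_neg_of_pos hρ0)
  exact ⟨(1 - 2 ^ (-ρ))⁻¹, inv_pos.2 (sub_pos.2 hr1), 2, two_pos,
    fun b hb => tsum_pow_div_Gamma_mul_add_one_le hρ0 hb.le⟩

/-- Let `ρ ∈ (0, 1]`. There exist positive constants `c₁` and `c₂` (depending only on `ρ`)
such that for every `b > 0`, `∑_{j=0}^∞ b^j / Γ(jρ + 1) ≤ c₁ * exp (c₂ * b^(1/ρ))`. -/
theorem sum_div_gamma_upper_bound (ρ : ℝ) (hρ0 : 0 < ρ) (hρ1 : ρ ≤ 1) :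
    ∃ c₁ > 0, ∃ c₂ > 0, ∀ b : ℝ, 0 < b →
      (∑' j : ℕ, b ^ j / Real.Gamma ((j : ℝ) * ρ + 1)) ≤ c₁ * Real.exp (c₂ * b ^ (1 / ρ)) :=
  sum_div_gamma_upper_bound_general ρ hρ0
end

section
/- Let ρ > 0, let κ > 0 and c₁ > 0, and let f : (0, ∞) → [0, ∞) be a measurable, locally integrable function satisfying f(t) ≤ c₁ + κ ∫₀^t (t − s)^{ρ−1} f(s) ds for all t > 0. Then for every t > 0 one has f(t) ≤ c₁ · ∑_{k=0}^∞ (Γ(ρ) · κ · t^ρ)^k / Γ(kρ + 1). -/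
/-!
Write `F = ofReal ∘ f` and `I^α` for the Riemann–Liouville integral. The hypothesis says
`F ≤ c₁ + Γ(ρ) κ I^ρ F`. Substituting it into itself, using the semigroup law
`I^α I^β = I^(α+β)` (Tonelli and the Beta integral) and `I^α 1 = t^α / Γ(α + 1)`, gives after
`n` steps `F ≤ c₁ ∑_{k ≤ n} (Γ(ρ) κ t^ρ)^k / Γ(kρ + 1) + (Γ(ρ) κ)^(n+1) I^((n+1)ρ) F`.
Bounding the kernel of `I^((n+1)ρ)` by `t^(nρ)` times that of `I^ρ`, the remainder is
`O(n (Γ(ρ) κ t^ρ)^n / Γ(nρ + 1)) · I^ρ F(t)`, which tends to `0` because `Γ(nρ + 1)` outgrows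
every geometric sequence.
-/

open MeasureTheory

open Set Filter Topology
open scoped ENNReal

lemma Real.rpow_sub_one_mul_exp_neg_le_Gamma {x A : ℝ} (hx : 1 ≤ x) (hA : 0 < A) :
    A ^ (x - 1) * Real.exp (-(A + 1)) ≤ Real.Gamma x := by
  have hx0 : 0 < x := by linarith
  have hint := Real.GammaIntegral_convergent hx0
  rw [Real.Gamma_eq_integral hx0]
  calc A ^ (x - 1) * Real.exp (-(A + 1))
      = ∫ _ in Ioc A (A + 1), A ^ (x - 1) * Real.exp (-(A + 1)) := by simp
    _ ≤ ∫ s in Ioc A (A + 1), Real.exp (-s) * s ^ (x - 1) := by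
        refine setIntegral_mono_on (integrableOn_const (by simp))
          (hint.mono_set fun s hs => hA.trans hs.1) measurableSet_Ioc fun s hs => ?_
        rw [mul_comm]
        gcongr <;> linarith [hs.1, hs.2]
    _ ≤ ∫ s in Ioi 0, Real.exp (-s) * s ^ (x - 1) := by
        refine setIntegral_mono_set hint ?_ (.of_forall fun s hs => hA.trans hs.1)
        filter_upwards [ae_restrict_mem measurableSet_Ioi] with s hs
        exact mul_nonneg (Real.exp_pos _).le (Real.rpow_nonneg (le_of_lt hs) _)

lemma exists_pow_div_Gamma_le_geometric {ρ c r : ℝ} (hρ : 0 < ρ) (hc : 0 ≤ c) (hr : 0 < r) :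
    ∃ B, ∀ n : ℕ, c ^ n / Real.Gamma (n * ρ + 1) ≤ B * r ^ n := by
  set A := (c / r + 1) ^ ρ⁻¹
  have hA : 0 < A := by positivity
  have hAρ : A ^ ρ = c / r + 1 := Real.rpow_inv_rpow (by positivity) hρ.ne'
  refine ⟨Real.exp (A + 1), fun n => ?_⟩
  have hΓ := Real.rpow_sub_one_mul_exp_neg_le_Gamma (x := n * ρ + 1)
    (le_add_of_nonneg_left (by positivity)) hA
  have hpow : A ^ ((n : ℝ) * ρ) = (c / r + 1) ^ n := by
    rw [mul_comm, Real.rpow_mul_natCast hA.le, hAρ]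
  rw [add_sub_cancel_right, hpow] at hΓ
  calc c ^ n / Real.Gamma (n * ρ + 1)
      ≤ c ^ n / ((c / r + 1) ^ n * Real.exp (-(A + 1))) :=
        div_le_div_of_nonneg_left (by positivity) (by positivity) hΓ
    _ = Real.exp (A + 1) * (c / (c / r + 1)) ^ n := by
        rw [Real.exp_neg, div_pow]
        field_simp
    _ ≤ Real.exp (A + 1) * r ^ n := by
        gcongr
        rw [div_le_iff₀ (by positivity)]
        field_simp
        linarith

lemma summable_pow_div_Gamma {ρ c : ℝ} (hρ : 0 < ρ) (hc : 0 ≤ c) :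
    Summable fun n : ℕ => c ^ n / Real.Gamma (n * ρ + 1) := by
  obtain ⟨B, hB⟩ := exists_pow_div_Gamma_le_geometric hρ hc one_half_pos
  exact .of_nonneg_of_le (fun n => by positivity) hB
    ((summable_geometric_of_lt_one one_half_pos.le one_half_lt_one).mul_left B)

lemma one_le_tsum_pow_div_Gamma {ρ c : ℝ} (hρ : 0 < ρ) (hc : 0 ≤ c) :
    1 ≤ ∑' n : ℕ, c ^ n / Real.Gamma (n * ρ + 1) := by
  simpa using (summable_pow_div_Gamma hρ hc).le_tsum 0 fun n _ => by positivity

lemma tendsto_natCast_mul_pow_div_Gamma {ρ c : ℝ} (hρ : 0 < ρ) (hc : 0 ≤ c) :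
    Tendsto (fun n : ℕ => n * (c ^ n / Real.Gamma (n * ρ + 1))) atTop (𝓝 0) := by
  obtain ⟨B, hB⟩ := exists_pow_div_Gamma_le_geometric hρ hc one_half_pos
  refine squeeze_zero (g := fun n : ℕ => B * (n * (1 / 2 : ℝ) ^ n)) (fun n => by positivity)
    (fun n => ?_) (by simpa using
      (tendsto_self_mul_const_pow_of_lt_one one_half_pos.le one_half_lt_one).const_mul B)
  calc (n : ℝ) * (c ^ n / Real.Gamma (n * ρ + 1)) ≤ n * (B * (1 / 2) ^ n) := by
        gcongr
        exact hB n
    _ = B * (n * (1 / 2) ^ n) := by ring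

lemma lintegral_Ioo_rpow_mul_one_sub_rpow {a b : ℝ} (ha : 0 < a) (hb : 0 < b) :
    ∫⁻ x in Ioo 0 1, ENNReal.ofReal (x ^ (a - 1) * (1 - x) ^ (b - 1)) =
      ENNReal.ofReal (ProbabilityTheory.beta a b) := by
  have hB := ProbabilityTheory.beta_pos ha hb
  have h := ProbabilityTheory.lintegral_betaPDF_eq_one ha hb
  rw [ProbabilityTheory.lintegral_betaPDF] at h
  calc ∫⁻ x in Ioo 0 1, ENNReal.ofReal (x ^ (a - 1) * (1 - x) ^ (b - 1))
      = ∫⁻ x in Ioo 0 1, ENNReal.ofReal (ProbabilityTheory.beta a b) *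
          ENNReal.ofReal (1 / ProbabilityTheory.beta a b * x ^ (a - 1) * (1 - x) ^ (b - 1)) := by
        refine lintegral_congr fun x => ?_
        rw [← ENNReal.ofReal_mul hB.le]
        congr 1
        field_simp
    _ = _ := by rw [lintegral_const_mul' _ _ ENNReal.ofReal_ne_top, h, mul_one]

lemma lintegral_Ioo_lintegral_Ioo_comm {F : ℝ → ℝ → ℝ≥0∞} (hF : Measurable (Function.uncurry F))
    (a t : ℝ) :
    ∫⁻ s in Ioo a t, ∫⁻ u in Ioo a s, F s u = ∫⁻ u in Ioo a t, ∫⁻ s in Ioo u t, F s u := by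
  have hG : Measurable fun p : ℝ × ℝ => (Iio p.1).indicator (F p.1) p.2 := by
    have : (fun p : ℝ × ℝ => (Iio p.1).indicator (F p.1) p.2) =
        {p : ℝ × ℝ | p.2 < p.1}.indicator (Function.uncurry F) := by
      ext p
      simp [indicator_apply, Function.uncurry]
    rw [this]
    exact hF.indicator (measurableSet_lt measurable_snd measurable_fst)
  calc ∫⁻ s in Ioo a t, ∫⁻ u in Ioo a s, F s u
      = ∫⁻ s in Ioo a t, ∫⁻ u in Ioo a t, (Iio s).indicator (F s) u :=
        setLIntegral_congr_fun measurableSet_Ioo fun s hs => by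
          rw [lintegral_indicator measurableSet_Iio, Measure.restrict_restrict measurableSet_Iio,
            Iio_inter_Ioo, min_eq_left hs.2.le]
    _ = ∫⁻ u in Ioo a t, ∫⁻ s in Ioo a t, (Iio s).indicator (F s) u :=
        lintegral_lintegral_swap hG.aemeasurable
    _ = ∫⁻ u in Ioo a t, ∫⁻ s in Ioo u t, F s u :=
        setLIntegral_congr_fun measurableSet_Ioo fun u hu => by
          have : (fun s => (Iio s).indicator (F s) u) = (Ioi u).indicator (fun s => F s u) := by
            ext s
            simp [indicator_apply]
          rw [this, lintegral_indicator measurableSet_Ioi,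
            Measure.restrict_restrict measurableSet_Ioi, Ioi_inter_Ioo, max_eq_left hu.1.le]

noncomputable def rlKernel (α x : ℝ) : ℝ≥0∞ := ENNReal.ofReal (x ^ (α - 1) / Real.Gamma α)

@[fun_prop]
lemma measurable_rlKernel (α : ℝ) : Measurable (rlKernel α) := by
  unfold rlKernel
  fun_prop

/-- The Riemann–Liouville integral `(I^α g)(t) = Γ(α)⁻¹ ∫₀ᵗ (t - s)^(α-1) g(s) ds`, taken in
`ℝ≥0∞` so that iterating it needs no integrability side conditions. -/
noncomputable def rlIntegral (α : ℝ) (g : ℝ → ℝ≥0∞) (t : ℝ) : ℝ≥0∞ :=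
  ∫⁻ s in Ioo 0 t, rlKernel α (t - s) * g s

lemma lintegral_rlKernel_mul_rlKernel {α β u t : ℝ} (hα : 0 < α) (hβ : 0 < β) (hut : u < t) :
    ∫⁻ s in Ioo u t, rlKernel α (t - s) * rlKernel β (s - u) = rlKernel (α + β) (t - u) := by
  have hT : 0 < t - u := sub_pos.2 hut
  have himage : Ioo u t = (fun x => (t - u) * x + u) '' Ioo 0 1 := by
    rw [image_affine_Ioo hT]
    simp
  rw [himage, lintegral_image_eq_lintegral_abs_deriv_mul (f' := fun _ => t - u) measurableSet_Ioo
    (fun x _ => by simpa using (((hasDerivAt_id x).const_mul (t - u)).add_const u).hasDerivWithinAt)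
    (fun x _ y _ h => by simpa [hT.ne'] using h)]
  calc ∫⁻ x in Ioo 0 1, ENNReal.ofReal |t - u| *
        (rlKernel α (t - ((t - u) * x + u)) * rlKernel β ((t - u) * x + u - u))
      = ∫⁻ x in Ioo 0 1, ENNReal.ofReal ((t - u) ^ (α + β - 1) / (Real.Gamma α * Real.Gamma β)) *
          ENNReal.ofReal (x ^ (β - 1) * (1 - x) ^ (α - 1)) := by
        refine setLIntegral_congr_fun measurableSet_Ioo fun x hx => ?_
        have hx0 : 0 ≤ x := hx.1.le
        have hx1 : 0 ≤ 1 - x := by linarith [hx.2]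
        rw [show t - ((t - u) * x + u) = (t - u) * (1 - x) by ring,
          show (t - u) * x + u - u = (t - u) * x by ring, abs_of_pos hT, rlKernel, rlKernel,
          Real.mul_rpow hT.le hx1, Real.mul_rpow hT.le hx0, ← ENNReal.ofReal_mul (by positivity),
          ← ENNReal.ofReal_mul (by positivity), ← ENNReal.ofReal_mul (by positivity)]
        congr 1
        rw [show α + β - 1 = 1 + (α - 1) + (β - 1) by ring,
          Real.rpow_add hT, Real.rpow_add hT, Real.rpow_one]
        field_simp
    _ = rlKernel (α + β) (t - u) := by
        rw [lintegral_const_mul' _ _ ENNReal.ofReal_ne_top,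
          lintegral_Ioo_rpow_mul_one_sub_rpow hβ hα, ← ENNReal.ofReal_mul (by positivity),
          rlKernel, ProbabilityTheory.beta, add_comm β α]
        congr 1
        field_simp

lemma rlIntegral_one {α t : ℝ} (hα : 0 < α) (ht : 0 < t) :
    rlIntegral α 1 t = ENNReal.ofReal (t ^ α / Real.Gamma (α + 1)) := by
  have h := lintegral_rlKernel_mul_rlKernel hα one_pos ht
  simp only [rlKernel, sub_self, Real.rpow_zero, Real.Gamma_one, div_one, ENNReal.ofReal_one,
    mul_one, sub_zero, add_sub_cancel_right] at h
  simpa [rlIntegral, rlKernel] using h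

theorem rlIntegral_rlIntegral {α β : ℝ} (hα : 0 < α) (hβ : 0 < β) {g : ℝ → ℝ≥0∞}
    (hg : Measurable g) (t : ℝ) :
    rlIntegral α (rlIntegral β g) t = rlIntegral (α + β) g t := by
  unfold rlIntegral
  calc ∫⁻ s in Ioo 0 t, rlKernel α (t - s) * ∫⁻ u in Ioo 0 s, rlKernel β (s - u) * g u
      = ∫⁻ s in Ioo 0 t, ∫⁻ u in Ioo 0 s, rlKernel α (t - s) * rlKernel β (s - u) * g u := by
        refine lintegral_congr fun s => ?_
        rw [← lintegral_const_mul _ (by fun_prop)]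
        simp_rw [mul_assoc]
    _ = ∫⁻ u in Ioo 0 t, ∫⁻ s in Ioo u t, rlKernel α (t - s) * rlKernel β (s - u) * g u :=
        lintegral_Ioo_lintegral_Ioo_comm (by fun_prop) 0 t
    _ = ∫⁻ u in Ioo 0 t, (∫⁻ s in Ioo u t, rlKernel α (t - s) * rlKernel β (s - u)) * g u :=
        lintegral_congr fun u => lintegral_mul_const _ (by fun_prop)
    _ = ∫⁻ u in Ioo 0 t, rlKernel (α + β) (t - u) * g u :=
        setLIntegral_congr_fun measurableSet_Ioo fun u hu => by
          rw [lintegral_rlKernel_mul_rlKernel hα hβ hu.2]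

lemma rlIntegral_mono {α t : ℝ} {g h : ℝ → ℝ≥0∞} (hgh : ∀ s ∈ Ioo 0 t, g s ≤ h s) :
    rlIntegral α g t ≤ rlIntegral α h t :=
  setLIntegral_mono' measurableSet_Ioo fun s hs => mul_le_mul_right (hgh s hs) _

lemma rlIntegral_const_add_mul (α : ℝ) (A : ℝ≥0∞) {L : ℝ≥0∞} (hL : L ≠ ∞) (g : ℝ → ℝ≥0∞)
    (t : ℝ) :
    rlIntegral α (fun s => A + L * g s) t = A * rlIntegral α 1 t + L * rlIntegral α g t := by
  simp only [rlIntegral, mul_add, Pi.one_apply, mul_one]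
  rw [lintegral_add_left (by fun_prop), lintegral_mul_const _ (by fun_prop), mul_comm,
    ← lintegral_const_mul' _ _ hL]
  simp_rw [mul_left_comm L]

lemma rlIntegral_le_rpow_mul_rlIntegral {α β t : ℝ} (hβ : 0 < β) (hβα : β ≤ α) (ht : 0 < t)
    (g : ℝ → ℝ≥0∞) :
    rlIntegral α g t ≤
      ENNReal.ofReal (t ^ (α - β) * Real.Gamma β / Real.Gamma α) * rlIntegral β g t := by
  have hα : 0 < α := hβ.trans_le hβα
  rw [rlIntegral, rlIntegral, ← lintegral_const_mul' _ _ ENNReal.ofReal_ne_top]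
  refine setLIntegral_mono' measurableSet_Ioo fun s hs => ?_
  have hts : 0 < t - s := sub_pos.2 hs.2
  rw [← mul_assoc, rlKernel, rlKernel, ← ENNReal.ofReal_mul (by positivity)]
  gcongr
  calc (t - s) ^ (α - 1) / Real.Gamma α
      = (t - s) ^ (α - β) * Real.Gamma β / Real.Gamma α * ((t - s) ^ (β - 1) / Real.Gamma β) := by
        rw [show α - 1 = (α - β) + (β - 1) by ring, Real.rpow_add hts]
        field_simp
    _ ≤ t ^ (α - β) * Real.Gamma β / Real.Gamma α * ((t - s) ^ (β - 1) / Real.Gamma β) := by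
        gcongr
        linarith [hs.1]

lemma tendsto_pow_mul_rlIntegral_natCast_mul {ρ c t : ℝ} (hρ : 0 < ρ) (hc : 0 ≤ c) (ht : 0 < t)
    {g : ℝ → ℝ≥0∞} (hfin : rlIntegral ρ g t ≠ ∞) :
    Tendsto (fun n : ℕ => ENNReal.ofReal c ^ n * rlIntegral (n * ρ) g t) atTop (𝓝 0) := by
  set ε : ℕ → ℝ := fun n => Real.Gamma ρ * t ^ (-ρ) * ρ *
    (n * ((c * t ^ ρ) ^ n / Real.Gamma (n * ρ + 1)))
  have hε : Tendsto ε atTop (𝓝 0) := by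
    simpa using (tendsto_natCast_mul_pow_div_Gamma hρ (by positivity : 0 ≤ c * t ^ ρ)).const_mul
      (Real.Gamma ρ * t ^ (-ρ) * ρ)
  have hbound : ∀ n : ℕ, 1 ≤ n →
      ENNReal.ofReal c ^ n * rlIntegral (n * ρ) g t ≤ ENNReal.ofReal (ε n) * rlIntegral ρ g t := by
    intro n hn
    have hn' : (1 : ℝ) ≤ n := by exact_mod_cast hn
    have hnρ : 0 < (n : ℝ) * ρ := by positivity
    calc ENNReal.ofReal c ^ n * rlIntegral (n * ρ) g t
        ≤ ENNReal.ofReal c ^ n * (ENNReal.ofReal (t ^ (n * ρ - ρ) * Real.Gamma ρ /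
            Real.Gamma (n * ρ)) * rlIntegral ρ g t) := by
          gcongr
          exact rlIntegral_le_rpow_mul_rlIntegral hρ (by nlinarith) ht g
      _ = ENNReal.ofReal (ε n) * rlIntegral ρ g t := by
          rw [← mul_assoc, ← ENNReal.ofReal_pow hc, ← ENNReal.ofReal_mul (by positivity)]
          congr 2
          simp only [ε]
          rw [Real.Gamma_add_one hnρ.ne', mul_pow, ← Real.rpow_natCast, ← Real.rpow_natCast,
            ← Real.rpow_mul ht.le, Real.rpow_sub ht, Real.rpow_neg ht.le, mul_comm ρ]
          field_simp
  refine tendsto_of_tendsto_of_tendsto_of_le_of_le' tendsto_const_nhds ?_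
    (.of_forall fun _ => zero_le) (eventually_atTop.2 ⟨1, hbound⟩)
  simpa using ENNReal.Tendsto.mul_const (ENNReal.tendsto_ofReal hε) (.inr hfin)

lemma le_sum_add_rlIntegral_of_le_add_rlIntegral {ρ c : ℝ} (hρ : 0 < ρ) (hc : 0 ≤ c)
    {A : ℝ≥0∞} {g : ℝ → ℝ≥0∞} (hg : Measurable g)
    (h : ∀ s, 0 < s → g s ≤ A + ENNReal.ofReal c * rlIntegral ρ g s) {t : ℝ} (ht : 0 < t)
    (n : ℕ) :
    g t ≤ A * ∑ k ∈ Finset.range (n + 1),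
        ENNReal.ofReal ((c * t ^ ρ) ^ k / Real.Gamma (k * ρ + 1)) +
      ENNReal.ofReal c ^ (n + 1) * rlIntegral ((n + 1 : ℕ) * ρ) g t := by
  induction n with
  | zero => simpa using h t ht
  | succ n ih =>
    have hnρ : 0 < ((n + 1 : ℕ) : ℝ) * ρ := by positivity
    have hterm : ENNReal.ofReal c ^ (n + 1) * rlIntegral ((n + 1 : ℕ) * ρ) 1 t =
        ENNReal.ofReal ((c * t ^ ρ) ^ (n + 1) / Real.Gamma ((n + 1 : ℕ) * ρ + 1)) := by
      rw [rlIntegral_one hnρ ht, ← ENNReal.ofReal_pow hc, ← ENNReal.ofReal_mul (by positivity),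
        mul_pow, ← Real.rpow_natCast (t ^ ρ), ← Real.rpow_mul ht.le, mul_comm ρ, mul_div_assoc]
    have hrem : rlIntegral ((n + 1 : ℕ) * ρ) g t ≤
        A * rlIntegral ((n + 1 : ℕ) * ρ) 1 t +
          ENNReal.ofReal c * rlIntegral ((n + 1 + 1 : ℕ) * ρ) g t := by
      calc rlIntegral ((n + 1 : ℕ) * ρ) g t
          ≤ rlIntegral ((n + 1 : ℕ) * ρ) (fun s => A + ENNReal.ofReal c * rlIntegral ρ g s) t :=
            rlIntegral_mono fun s hs => h s hs.1
        _ = _ := by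
            rw [rlIntegral_const_add_mul _ _ ENNReal.ofReal_ne_top, rlIntegral_rlIntegral hnρ hρ hg]
            push_cast
            ring_nf
    calc g t ≤ _ := ih
      _ ≤ A * ∑ k ∈ Finset.range (n + 1),
            ENNReal.ofReal ((c * t ^ ρ) ^ k / Real.Gamma (k * ρ + 1)) +
          ENNReal.ofReal c ^ (n + 1) * (A * rlIntegral ((n + 1 : ℕ) * ρ) 1 t +
            ENNReal.ofReal c * rlIntegral ((n + 1 + 1 : ℕ) * ρ) g t) := by
        gcongr
      _ = _ := by
        rw [Finset.sum_range_succ _ (n + 1), mul_add, mul_add, ← hterm]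
        ring

lemma le_mul_tsum_of_le_add_rlIntegral {ρ c : ℝ} (hρ : 0 < ρ) (hc : 0 ≤ c)
    {A : ℝ≥0∞} {g : ℝ → ℝ≥0∞} (hg : Measurable g)
    (h : ∀ s, 0 < s → g s ≤ A + ENNReal.ofReal c * rlIntegral ρ g s) {t : ℝ} (ht : 0 < t)
    (hfin : rlIntegral ρ g t ≠ ∞) :
    g t ≤ A * ENNReal.ofReal (∑' k : ℕ, (c * t ^ ρ) ^ k / Real.Gamma (k * ρ + 1)) := by
  have hrem := (tendsto_add_atTop_iff_nat 1).2
    (tendsto_pow_mul_rlIntegral_natCast_mul hρ hc ht hfin)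
  refine ge_of_tendsto (by simpa only [add_zero] using tendsto_const_nhds.add hrem)
    (.of_forall fun n => (le_sum_add_rlIntegral_of_le_add_rlIntegral hρ hc hg h ht n).trans ?_)
  gcongr
  rw [← ENNReal.ofReal_sum_of_nonneg fun k _ => by positivity]
  exact ENNReal.ofReal_le_ofReal (Summable.sum_le_tsum _ (fun k _ => by positivity)
    (summable_pow_div_Gamma hρ (by positivity)))

lemma ENNReal.ofReal_le_add_mul_of_le_add_mul_toReal {a c κ : ℝ} {X : ℝ≥0∞} (hc : 0 ≤ c)
    (hκ : 0 ≤ κ) (h : a ≤ c + κ * X.toReal) :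
    ENNReal.ofReal a ≤ ENNReal.ofReal c + ENNReal.ofReal κ * X :=
  calc ENNReal.ofReal a ≤ ENNReal.ofReal c + ENNReal.ofReal κ * ENNReal.ofReal X.toReal := by
        rw [← ENNReal.ofReal_mul hκ, ← ENNReal.ofReal_add hc (by positivity)]
        exact ENNReal.ofReal_le_ofReal h
    _ ≤ _ := by
        gcongr
        exact ENNReal.ofReal_toReal_le

lemma integral_Ioo_rpow_mul_eq_toReal_rlIntegral {ρ : ℝ} (hρ : 0 < ρ) {f : ℝ → ℝ}
    (hf : Measurable f) (hf₀ : ∀ s, 0 < s → 0 ≤ f s) (t : ℝ) :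
    ∫ s in Ioo 0 t, (t - s) ^ (ρ - 1) * f s =
      (ENNReal.ofReal (Real.Gamma ρ) * rlIntegral ρ (fun s => ENNReal.ofReal (f s)) t).toReal := by
  rw [integral_eq_lintegral_of_nonneg_ae (ae_restrict_of_forall_mem measurableSet_Ioo
      fun s hs => mul_nonneg (Real.rpow_nonneg (sub_pos.2 hs.2).le _) (hf₀ s hs.1))
    (by fun_prop), rlIntegral, ← lintegral_const_mul' _ _ ENNReal.ofReal_ne_top]
  congr 1
  refine setLIntegral_congr_fun measurableSet_Ioo fun s hs => ?_
  have hts : 0 < t - s := sub_pos.2 hs.2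
  rw [rlKernel, ← mul_assoc, ← ENNReal.ofReal_mul (by positivity),
    ← ENNReal.ofReal_mul (by positivity)]
  congr 1
  field_simp

theorem renewal_iteration_upper_general (ρ κ c₁ : ℝ) (hρ : 0 < ρ) (hκ : 0 < κ) (hc₁ : 0 < c₁)
    (f : ℝ → ℝ)
    (hf_meas : Measurable f)
    (hf_nonneg : ∀ t, 0 < t → 0 ≤ f t)
    (hf : ∀ t, 0 < t → f t ≤ c₁ + κ * ∫ s in Set.Ioo 0 t, (t - s) ^ (ρ - 1) * f s) :
    ∀ t, 0 < t →
      f t ≤ c₁ * ∑' k : ℕ, (Real.Gamma ρ * κ * t ^ ρ) ^ k / Real.Gamma ((k : ℝ) * ρ + 1) := by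
  intro t ht
  set F : ℝ → ℝ≥0∞ := fun s => ENNReal.ofReal (f s)
  have hS := one_le_tsum_pow_div_Gamma hρ (by positivity : 0 ≤ Real.Gamma ρ * κ * t ^ ρ)
  have hf' : ∀ s, 0 < s →
      f s ≤ c₁ + κ * (ENNReal.ofReal (Real.Gamma ρ) * rlIntegral ρ F s).toReal :=
    fun s hs => integral_Ioo_rpow_mul_eq_toReal_rlIntegral hρ hf_meas hf_nonneg s ▸ hf s hs
  by_cases hfin : rlIntegral ρ F t = ∞
  · -- the Bochner integral in `hf` then takes its junk value `0`
    have hft : f t ≤ c₁ := by simpa [hfin, ENNReal.mul_top, Real.Gamma_pos_of_pos hρ] using hf' t ht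
    nlinarith
  have hF : ∀ s, 0 < s →
      F s ≤ ENNReal.ofReal c₁ + ENNReal.ofReal (Real.Gamma ρ * κ) * rlIntegral ρ F s := by
    intro s hs
    rw [mul_comm _ κ, ENNReal.ofReal_mul hκ.le, mul_assoc]
    exact ENNReal.ofReal_le_add_mul_of_le_add_mul_toReal hc₁.le hκ.le (hf' s hs)
  have hFt := le_mul_tsum_of_le_add_rlIntegral hρ (by positivity) (by fun_prop) hF ht hfin
  rwa [← ENNReal.ofReal_mul hc₁.le, ENNReal.ofReal_le_ofReal_iff (by nlinarith)] at hFt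

/-- If `ρ > 0`, `κ > 0`, `c₁ > 0` and `f` is a nonnegative measurable locally integrable
function on `(0,∞)` with `f t ≤ c₁ + κ ∫₀^t (t-s)^{ρ-1} f s ds` for all `t > 0`, then
`f t ≤ c₁ * ∑_{k=0}^∞ (Γ(ρ) κ t^ρ)^k / Γ(kρ + 1)` for all `t > 0`. -/
theorem renewal_iteration_upper (ρ κ c₁ : ℝ) (hρ : 0 < ρ) (hκ : 0 < κ) (hc₁ : 0 < c₁)
    (f : ℝ → ℝ)
    (hf_meas : Measurable f)
    (hf_nonneg : ∀ t, 0 < t → 0 ≤ f t)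
    (hf_loc : LocallyIntegrableOn f (Set.Ioi 0))
    (hf : ∀ t, 0 < t → f t ≤ c₁ + κ * ∫ s in Set.Ioo 0 t, (t - s) ^ (ρ - 1) * f s) :
    ∀ t, 0 < t →
      f t ≤ c₁ * ∑' k : ℕ, (Real.Gamma ρ * κ * t ^ ρ) ^ k / Real.Gamma ((k : ℝ) * ρ + 1) :=
  renewal_iteration_upper_general ρ κ c₁ hρ hκ hc₁ f hf_meas hf_nonneg hf
end

section
/- Let d ≥ 1 be an integer, let α ∈ (1, 2], and let c > 0. Suppose p : (0, ∞) × ℝ^d × ℝ^d → [0, ∞) is a kernel satisfying the lower heat-kernel bound p_t(x, y) ≥ c · min(t^{−d/α}, t / |x − y|^{d+α}) for all t > 0 and x, y ∈ ℝ^d. Let u₀ : ℝ^d → [0, ∞) be a bounded measurable function and suppose there is a bounded measurable set A ⊂ ℝ^d with ∫_A u₀(x) dx > 0. Then there exist T > 0 and a constant c₁ > 0 such that for all t > T and all x ∈ ℝ^d with |x| ≤ t^{1/α}, one has ∫_{ℝ^d} p_t(x, y) u₀(y) dy ≥ c₁ · t^{−d/α}. -/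
/-!
For `y` in a ball `closedBall 0 R ⊇ A`, `|x| ≤ t^{1/α}` and `t > R^α` we have `|x - y| ≤ 2 t^{1/α}`,
and on that diffusive scale the profile `min (t^{-d/α}) (t / r^{d+α})` is at least
`2^{-(d+α)} t^{-d/α}`. This fails only at `r = 0` (where `t / 0 = 0`), i.e. at the single point
`y = x`, which is null because `d ≥ 1`. Integrating `p_t(x, ·) u₀` over `A` then gives the bound
with `c₁ = c 2^{-(d+α)} ∫_A u₀`.
-/

open MeasureTheory Metric Real

noncomputable def stableKernelProfile (d α t r : ℝ) : ℝ :=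
  min (t ^ (-d / α)) (t / r ^ (d + α))

theorem inv_two_rpow_mul_rpow_neg_le_rpow_div {d α s r : ℝ} (hd : 0 ≤ d) (hα : 0 < α)
    (hs : 0 < s) (hr : 0 < r) (hrs : r ≤ 2 * s) :
    (2 ^ (d + α))⁻¹ * s ^ (-d) ≤ s ^ α / r ^ (d + α) :=
  calc (2 ^ (d + α))⁻¹ * s ^ (-d) = s ^ α / (2 * s) ^ (d + α) := by
        rw [mul_rpow zero_le_two hs.le, rpow_add hs, rpow_neg hs.le]
        field_simp
    _ ≤ s ^ α / r ^ (d + α) := by gcongr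

theorem inv_two_rpow_mul_le_stableKernelProfile {d α t r : ℝ} (hd : 0 ≤ d) (hα : 0 < α)
    (ht : 0 < t) (hr : 0 < r) (hrt : r ≤ 2 * t ^ (1 / α)) :
    (2 ^ (d + α))⁻¹ * t ^ (-d / α) ≤ stableKernelProfile d α t r := by
  have h_time : t ^ (-d / α) = (t ^ (1 / α)) ^ (-d) := by
    rw [← rpow_mul ht.le, one_div_mul_eq_div]
  have h_space : t = (t ^ (1 / α)) ^ α := by
    rw [one_div, rpow_inv_rpow ht.le hα.ne']
  refine le_min (mul_le_of_le_one_left (by positivity) ?_) ?_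
  · exact inv_le_one_of_one_le₀ (one_le_rpow one_le_two (by positivity))
  · conv_rhs => rw [h_space]
    rw [h_time]
    exact inv_two_rpow_mul_rpow_neg_le_rpow_div hd hα (by positivity) hr hrt

theorem const_mul_setIntegral_le_integral {X : Type*} [MeasurableSpace X] {μ : Measure X}
    {s : Set X} {f g : X → ℝ} {C : ℝ} (hf : IntegrableOn f s μ) (hg : Integrable g μ)
    (hg_nonneg : 0 ≤ᵐ[μ] g) (hfg : ∀ᵐ y ∂μ.restrict s, C * f y ≤ g y) :
    C * ∫ y in s, f y ∂μ ≤ ∫ y, g y ∂μ :=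
  calc C * ∫ y in s, f y ∂μ = ∫ y in s, C * f y ∂μ := (integral_const_mul C f).symm
    _ ≤ ∫ y in s, g y ∂μ := integral_mono_ae (hf.const_mul C) hg.integrableOn hfg
    _ ≤ ∫ y, g y ∂μ := setIntegral_le_integral hg hg_nonneg

theorem linear_part_lower_bound_general (d : ℕ) (hd : 1 ≤ d) (α : ℝ) (hα1 : 1 < α)
    (c : ℝ) (hc : 0 < c)
    (p : ℝ → EuclideanSpace ℝ (Fin d) → EuclideanSpace ℝ (Fin d) → ℝ)
    (hp_nonneg : ∀ t, 0 < t → ∀ x y, 0 ≤ p t x y)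
    (hp_lb : ∀ t, 0 < t → ∀ x y,
      c * min (t ^ (-(d : ℝ) / α)) (t / ‖x - y‖ ^ ((d : ℝ) + α)) ≤ p t x y)
    (u₀ : EuclideanSpace ℝ (Fin d) → ℝ)
    (hu₀_nonneg : ∀ x, 0 ≤ u₀ x)
    (A : Set (EuclideanSpace ℝ (Fin d)))
    (hA_bdd : Bornology.IsBounded A) (hA_pos : 0 < ∫ x in A, u₀ x)
    (h_int : ∀ t, 0 < t → ∀ x, Integrable (fun y => p t x y * u₀ y)) :
    ∃ T > 0, ∃ c₁ > 0, ∀ t, T < t → ∀ x : EuclideanSpace ℝ (Fin d), ‖x‖ ≤ t ^ (1 / α) →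
      c₁ * t ^ (-(d : ℝ) / α) ≤ ∫ y, p t x y * u₀ y := by
  have : Nonempty (Fin d) := ⟨⟨0, hd⟩⟩
  have hα : 0 < α := zero_lt_one.trans hα1
  obtain ⟨R, hR, hAR⟩ := hA_bdd.subset_closedBall_lt 0 0
  refine ⟨R ^ α, by positivity, c * (2 ^ ((d : ℝ) + α))⁻¹ * ∫ x in A, u₀ x, by positivity,
    fun t hTt x hx => ?_⟩
  have ht : 0 < t := (rpow_pos_of_pos hR α).trans hTt
  have hRt : R ≤ t ^ (1 / α) := by
    calc R = (R ^ α) ^ (1 / α) := by rw [one_div, rpow_rpow_inv hR.le hα.ne']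
      _ ≤ t ^ (1 / α) := by gcongr
  have hp_ge : ∀ᵐ y ∂volume.restrict A,
      c * (2 ^ ((d : ℝ) + α))⁻¹ * t ^ (-(d : ℝ) / α) * u₀ y ≤ p t x y * u₀ y := by
    filter_upwards [ae_restrict_of_ae_restrict_of_subset hAR
      (ae_restrict_mem measurableSet_closedBall), ae_restrict_of_ae (volume.ae_ne x)]
      with y hyR hyx
    have hxy : ‖x - y‖ ≤ 2 * t ^ (1 / α) := by
      have hy : ‖y‖ ≤ R := by simpa using hyR
      linarith [norm_sub_le x y]
    gcongr ?_ * u₀ y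
    · exact hu₀_nonneg y
    calc c * (2 ^ ((d : ℝ) + α))⁻¹ * t ^ (-(d : ℝ) / α)
        = c * ((2 ^ ((d : ℝ) + α))⁻¹ * t ^ (-(d : ℝ) / α)) := mul_assoc _ _ _
      _ ≤ c * stableKernelProfile d α t ‖x - y‖ := by
        gcongr
        exact inv_two_rpow_mul_le_stableKernelProfile (Nat.cast_nonneg d) hα ht
          (norm_sub_pos_iff.2 hyx.symm) hxy
      _ ≤ p t x y := hp_lb t ht x y
  calc c * (2 ^ ((d : ℝ) + α))⁻¹ * (∫ x in A, u₀ x) * t ^ (-(d : ℝ) / α)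
      = c * (2 ^ ((d : ℝ) + α))⁻¹ * t ^ (-(d : ℝ) / α) * ∫ y in A, u₀ y := by ring
    _ ≤ ∫ y, p t x y * u₀ y :=
      const_mul_setIntegral_le_integral (.of_integral_ne_zero hA_pos.ne') (h_int t ht x)
        (ae_of_all _ fun y => mul_nonneg (hp_nonneg t ht x y) (hu₀_nonneg y)) hp_ge

/-- Lower bound on the linear part of the solution: if the kernel `p` satisfies the
lower heat-kernel bound `p t x y ≥ c * min (t^{-d/α}) (t / |x-y|^{d+α})` and the bounded
nonnegative initial condition `u₀` has positive integral over a bounded set `A`, then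
there exist `T > 0` and `c₁ > 0` such that `∫ p t x y * u₀ y dy ≥ c₁ * t^{-d/α}`
for all `t > T` and all `x` with `|x| ≤ t^{1/α}`. -/
theorem linear_part_lower_bound (d : ℕ) (hd : 1 ≤ d) (α : ℝ) (hα1 : 1 < α) (hα2 : α ≤ 2)
    (c : ℝ) (hc : 0 < c)
    (p : ℝ → EuclideanSpace ℝ (Fin d) → EuclideanSpace ℝ (Fin d) → ℝ)
    (hp_nonneg : ∀ t, 0 < t → ∀ x y, 0 ≤ p t x y)
    (hp_meas : ∀ t, 0 < t → ∀ x, Measurable (fun y => p t x y))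
    (hp_lb : ∀ t, 0 < t → ∀ x y,
      c * min (t ^ (-(d : ℝ) / α)) (t / ‖x - y‖ ^ ((d : ℝ) + α)) ≤ p t x y)
    (u₀ : EuclideanSpace ℝ (Fin d) → ℝ)
    (hu₀_meas : Measurable u₀) (hu₀_nonneg : ∀ x, 0 ≤ u₀ x)
    (M : ℝ) (hu₀_bdd : ∀ x, u₀ x ≤ M)
    (A : Set (EuclideanSpace ℝ (Fin d))) (hA_meas : MeasurableSet A)
    (hA_bdd : Bornology.IsBounded A) (hA_pos : 0 < ∫ x in A, u₀ x)
    (h_int : ∀ t, 0 < t → ∀ x, Integrable (fun y => p t x y * u₀ y)) :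
    ∃ T > 0, ∃ c₁ > 0, ∀ t, T < t → ∀ x : EuclideanSpace ℝ (Fin d), ‖x‖ ≤ t ^ (1 / α) →
      c₁ * t ^ (-(d : ℝ) / α) ≤ ∫ y, p t x y * u₀ y :=
  linear_part_lower_bound_general d hd α hα1 c hc p hp_nonneg hp_lb u₀ hu₀_nonneg A hA_bdd hA_pos
    h_int
end

section
/- Let d ≥ 1 be an integer, let α ∈ (1, 2], let β satisfy 0 < β < min(α, d), let t > 0, and let q ∈ (0, (α − β)/(2α)). Then there exists a constant c₁ > 0 (which may depend on t, α, β, d, q) such that for every h ∈ (0, 1), ∫₀^t ∫_{ℝ^d} (e^{−(t − s + h)|ξ|^α} − e^{−(t − s)|ξ|^α})² · |ξ|^{β − d} dξ ds ≤ c₁ · h^{2q}. -/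
open MeasureTheory

/-!
Write `a = t - s` and `x = |ξ|^α`. Since `e^{-(a+h)x} - e^{-ax} = -e^{-ax}(1 - e^{-hx})` and
`1 - e^{-y} ≤ min(y, 1) ≤ y^q` for `q ≤ 1`, the integrand is at most
`h^{2q} |ξ|^{2αq + β - d} e^{-a|ξ|^α}`. In polar coordinates its integral is a Gamma integral,
equal to a constant times `a^{-γ}` with `γ = (2αq + β)/α`, and `γ < 1` is exactly the condition
`q < (α - β)/(2α)`, so that `a^{-γ} = (t - s)^{-γ}` is integrable over `s ∈ (0, t)`.
-/

open Real Set Metric Module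

namespace Real

theorem one_sub_exp_neg_le_rpow {y q : ℝ} (hy : 0 ≤ y) (hq0 : 0 ≤ q) (hq1 : q ≤ 1) :
    1 - exp (-y) ≤ y ^ q := by
  rcases le_or_gt y 1 with hy1 | hy1
  · calc 1 - exp (-y) ≤ y := by linarith [add_one_le_exp (-y)]
      _ = y ^ (1 : ℝ) := (rpow_one y).symm
      _ ≤ y ^ q := rpow_le_rpow_of_exponent_ge' hy hy1 hq0 hq1
  · calc 1 - exp (-y) ≤ 1 := by linarith [exp_pos (-y)]
      _ ≤ y ^ q := one_le_rpow hy1.le hq0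

theorem sq_exp_neg_add_mul_sub_exp_neg_mul_le {a h x q : ℝ} (ha : 0 ≤ a) (hh : 0 ≤ h)
    (hx : 0 ≤ x) (hq0 : 0 ≤ q) (hq1 : q ≤ 1 / 2) :
    (exp (-((a + h) * x)) - exp (-(a * x))) ^ 2 ≤ exp (-(a * x)) * (h * x) ^ (2 * q) := by
  have hhx : 0 ≤ h * x := mul_nonneg hh hx
  have hsub : 0 ≤ 1 - exp (-(h * x)) := by linarith [exp_le_one_iff.mpr (neg_nonpos.mpr hhx)]
  calc (exp (-((a + h) * x)) - exp (-(a * x))) ^ 2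
      = exp (-(a * x)) ^ 2 * (1 - exp (-(h * x))) ^ 2 := by
        rw [show -((a + h) * x) = -(a * x) + -(h * x) by ring, exp_add]
        ring
    _ ≤ exp (-(a * x)) * ((h * x) ^ q) ^ 2 := by
        gcongr
        · exact pow_le_of_le_one (exp_pos _).le (exp_le_one_iff.mpr (by nlinarith)) two_ne_zero
        · exact one_sub_exp_neg_le_rpow hhx hq0 (by linarith)
    _ = exp (-(a * x)) * (h * x) ^ (2 * q) := by
        rw [← rpow_mul_natCast hhx, mul_comm q]
        norm_num

theorem eqOn_pow_pred_mul_rpow_sub {n : ℕ} {g : ℝ → ℝ} {p : ℝ} (hn : 0 < n) :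
    EqOn (fun y : ℝ ↦ y ^ (n - 1) * (y ^ (p - n) * g y)) (fun y ↦ y ^ (p - 1) * g y) (Ioi 0) := by
  intro y (hy : 0 < y)
  dsimp only
  rw [← mul_assoc, ← rpow_natCast, ← rpow_add hy, Nat.cast_pred hn]
  ring_nf

theorem integrableOn_Ioo_sub_rpow {r : ℝ} (hr : -1 < r) (t a b : ℝ) :
    IntegrableOn (fun s ↦ (t - s) ^ r) (Ioo a b) := by
  have : IntervalIntegrable (fun s ↦ (t - s) ^ r) volume a b := by
    simpa using
      (intervalIntegral.intervalIntegrable_rpow' hr (a := t - a) (b := t - b)).comp_sub_left t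
  exact (intervalIntegrable_iff.mp this).mono_set (Ioo_subset_Ioc_self.trans Ioc_subset_uIoc)

end Real

section Radial

variable {E : Type*} [NormedAddCommGroup E] [NormedSpace ℝ E] [MeasurableSpace E] [BorelSpace E]
  [FiniteDimensional ℝ E] [Nontrivial E] (μ : Measure E) [μ.IsAddHaarMeasure]

theorem integrable_norm_rpow_mul_exp_neg_mul_norm_rpow {p α a : ℝ} (hp : 0 < p) (hα : 0 < α)
    (ha : 0 < a) :
    Integrable (fun x : E ↦ ‖x‖ ^ (p - finrank ℝ E) * exp (-(a * ‖x‖ ^ α))) μ := by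
  rw [integrable_fun_norm_addHaar μ (f := fun y ↦ y ^ (p - finrank ℝ E) * exp (-(a * y ^ α)))]
  refine IntegrableOn.congr_fun ?_ (eqOn_pow_pred_mul_rpow_sub finrank_pos).symm
    measurableSet_Ioi
  simpa only [neg_mul, sub_add_cancel] using
    integrableOn_rpow_mul_exp_neg_mul_rpow (by linarith : -1 < p - 1) hα ha

theorem integral_norm_rpow_mul_exp_neg_mul_norm_rpow {p α a : ℝ} (hp : 0 < p) (hα : 0 < α)
    (ha : 0 < a) :
    ∫ x, ‖x‖ ^ (p - finrank ℝ E) * exp (-(a * ‖x‖ ^ α)) ∂μ =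
      finrank ℝ E * μ.real (ball 0 1) * (Gamma (p / α) / α) * a ^ (-(p / α)) := by
  rw [integral_fun_norm_addHaar μ (fun y ↦ y ^ (p - finrank ℝ E) * exp (-(a * y ^ α)))]
  simp only [nsmul_eq_mul, smul_eq_mul]
  rw [setIntegral_congr_fun measurableSet_Ioi (eqOn_pow_pred_mul_rpow_sub finrank_pos)]
  simp only [← neg_mul]
  rw [integral_rpow_mul_exp_neg_mul_rpow hα (by linarith) ha, sub_add_cancel, neg_div]
  ring

theorem integral_sq_exp_neg_mul_norm_rpow_sub_le {α β q a h : ℝ} (hα : 0 < α) (hβ : 0 < β)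
    (hq0 : 0 ≤ q) (hq1 : q ≤ 1 / 2) (ha : 0 < a) (hh : 0 ≤ h) :
    ∫ ξ, (exp (-((a + h) * ‖ξ‖ ^ α)) - exp (-(a * ‖ξ‖ ^ α))) ^ 2 * ‖ξ‖ ^ (β - finrank ℝ E) ∂μ ≤
      h ^ (2 * q) * ∫ ξ, ‖ξ‖ ^ (2 * α * q + β - finrank ℝ E) * exp (-(a * ‖ξ‖ ^ α)) ∂μ := by
  rw [← integral_const_mul]
  refine integral_mono_of_nonneg (ae_of_all _ fun ξ ↦ by positivity)
    ((integrable_norm_rpow_mul_exp_neg_mul_norm_rpow μ (by positivity) hα ha).const_mul _)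
    (ae_of_all _ fun ξ ↦ ?_)
  dsimp only
  rcases (norm_nonneg ξ).eq_or_lt with hr | hr
  · rw [← hr, zero_rpow hα.ne', mul_zero, mul_zero, sub_self, sq, zero_mul, zero_mul]
    positivity
  calc (exp (-((a + h) * ‖ξ‖ ^ α)) - exp (-(a * ‖ξ‖ ^ α))) ^ 2 * ‖ξ‖ ^ (β - finrank ℝ E)
      ≤ exp (-(a * ‖ξ‖ ^ α)) * (h * ‖ξ‖ ^ α) ^ (2 * q) * ‖ξ‖ ^ (β - finrank ℝ E) := by
        gcongr
        exact sq_exp_neg_add_mul_sub_exp_neg_mul_le ha.le hh (by positivity) hq0 hq1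
    _ = h ^ (2 * q) * (‖ξ‖ ^ (2 * α * q + β - finrank ℝ E) * exp (-(a * ‖ξ‖ ^ α))) := by
        rw [mul_rpow hh (by positivity), ← rpow_mul hr.le,
          show 2 * α * q + β - finrank ℝ E = α * (2 * q) + (β - finrank ℝ E) by ring,
          rpow_add hr]
        ring

end Radial

theorem heat_kernel_increment_estimate_general (d : ℕ) (hd : 1 ≤ d) (α β t q : ℝ)
    (hα1 : 1 < α) (hβ0 : 0 < β) (hq0 : 0 < q) (hq1 : q < (α - β) / (2 * α)) :
    ∃ c₁ > 0, ∀ h : ℝ, 0 < h → h < 1 →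
      (∫ s in Set.Ioo 0 t, ∫ ξ : EuclideanSpace ℝ (Fin d),
        (Real.exp (-((t - s + h) * ‖ξ‖ ^ α)) - Real.exp (-((t - s) * ‖ξ‖ ^ α))) ^ 2 *
          ‖ξ‖ ^ (β - (d : ℝ))) ≤ c₁ * h ^ (2 * q) := by
  have : Nonempty (Fin d) := Fin.pos_iff_nonempty.mp hd
  have hα : 0 < α := by linarith
  have hp : 2 * α * q + β < α := by
    rw [lt_div_iff₀ (by positivity)] at hq1
    linarith
  set γ := (2 * α * q + β) / α
  have hγ : γ < 1 := (div_lt_one hα).mpr hp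
  set C := d * volume.real (ball (0 : EuclideanSpace ℝ (Fin d)) 1) * (Gamma γ / α)
  set I := ∫ s in Ioo 0 t, (t - s) ^ (-γ)
  have hI : 0 ≤ I :=
    setIntegral_nonneg measurableSet_Ioo fun s hs ↦ rpow_nonneg (sub_nonneg.mpr hs.2.le) _
  refine ⟨C * I + 1, by positivity, fun h hh _ ↦ ?_⟩
  have inner (s : ℝ) (hs : s ∈ Ioo 0 t) : ∫ ξ : EuclideanSpace ℝ (Fin d),
      (exp (-((t - s + h) * ‖ξ‖ ^ α)) - exp (-((t - s) * ‖ξ‖ ^ α))) ^ 2 * ‖ξ‖ ^ (β - (d : ℝ)) ≤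
        h ^ (2 * q) * (C * (t - s) ^ (-γ)) := by
    have := integral_sq_exp_neg_mul_norm_rpow_sub_le (volume : Measure (EuclideanSpace ℝ (Fin d)))
      hα hβ0 hq0.le (by nlinarith) (sub_pos.mpr hs.2) hh.le
    rwa [integral_norm_rpow_mul_exp_neg_mul_norm_rpow volume (by positivity) hα (sub_pos.mpr hs.2),
      finrank_euclideanSpace_fin] at this
  calc _ ≤ ∫ s in Ioo 0 t, h ^ (2 * q) * (C * (t - s) ^ (-γ)) :=
        integral_mono_of_nonneg (ae_of_all _ fun s ↦ integral_nonneg fun ξ ↦ by positivity)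
          ((integrableOn_Ioo_sub_rpow (by linarith) t 0 t).const_mul C |>.const_mul _)
          ((ae_restrict_iff' measurableSet_Ioo).mpr (ae_of_all _ inner))
      _ = h ^ (2 * q) * (C * I) := by rw [integral_const_mul, integral_const_mul]
      _ ≤ (C * I + 1) * h ^ (2 * q) := by nlinarith [rpow_pos_of_pos hh (2 * q)]

/-- Temporal increment estimate for the Fourier transform of the fractional heat kernel:
for `q ∈ (0, (α-β)/(2α))` there is `c₁ > 0` such that for all `h ∈ (0,1)`,
`∫₀^t ∫_{ℝ^d} (e^{-(t-s+h)|ξ|^α} - e^{-(t-s)|ξ|^α})² |ξ|^{β-d} dξ ds ≤ c₁ h^{2q}`. -/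
theorem heat_kernel_increment_estimate (d : ℕ) (hd : 1 ≤ d) (α β t q : ℝ)
    (hα1 : 1 < α) (hα2 : α ≤ 2) (hβ0 : 0 < β) (hβα : β < α) (hβd : β < (d : ℝ))
    (ht : 0 < t) (hq0 : 0 < q) (hq1 : q < (α - β) / (2 * α)) :
    ∃ c₁ > 0, ∀ h : ℝ, 0 < h → h < 1 →
      (∫ s in Set.Ioo 0 t, ∫ ξ : EuclideanSpace ℝ (Fin d),
        (Real.exp (-((t - s + h) * ‖ξ‖ ^ α)) - Real.exp (-((t - s) * ‖ξ‖ ^ α))) ^ 2 *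
          ‖ξ‖ ^ (β - (d : ℝ))) ≤ c₁ * h ^ (2 * q) :=
  heat_kernel_increment_estimate_general d hd α β t q hα1 hβ0 hq0 hq1
end

section
/- Let α > 1, let t > 0, and let k ≥ 1 be an integer. Set s₀ := t. Then the iterated integral ∫₀^t ∫₀^{s₁} ⋯ ∫₀^{s_{k−1}} [ (t − s₁)(s₁ − s₂)⋯(s_{k−1} − s_k) ]^{−1/α} ds_k ds_{k−1} ⋯ ds₁ is bounded below by c₁^k · (t/k)^{k(α−1)/α}, where c₁ > 0 is a constant depending only on α (independent of k and t). In fact one may take c₁ = α/(α − 1). -/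
open MeasureTheory

/-- The iterated integral
`∫₀^t ∫₀^{s₁} ⋯ ∫₀^{s_{k-1}} ∏_{i=1}^k (s_{i-1} - s_i)^{-1/α} ds_k ⋯ ds₁`
(with `s₀ = t`), defined recursively. -/
noncomputable def iterIntegral (α : ℝ) : ℕ → ℝ → ℝ
  | 0, _ => 1
  | k + 1, t => ∫ s in Set.Ioo 0 t, (t - s) ^ (-(1 / α)) * iterIntegral α k s

/-!
With `β = 1 - 1/α`, the substitution `s = t u` shows `iterIntegral α k t = C_k t^{kβ}` with
`C_{k+1} = C_k B_k`, where `B_k = ∫₀¹ (1 - u)^{-1/α} u^{kβ} du`. Keeping only `u ≥ k/(k+1)`, where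
`u^{kβ} ≥ (k/(k+1))^{kβ}`, gives `B_k ≥ β⁻¹ k^{kβ} / (k+1)^{(k+1)β}`, and this product telescopes
to `C_k ≥ β^{-k} k^{-kβ}`.
-/

open Set Real

-- No integrability is needed: the substitution `s = t u` matches the integrands, junk values included.
lemma setIntegral_Ioo_sub_rpow_mul_rpow (a b : ℝ) {t : ℝ} (ht : 0 < t) :
    ∫ s in Ioo 0 t, (t - s) ^ a * s ^ b =
      t ^ (a + b + 1) * ∫ u in (0 : ℝ)..1, (1 - u) ^ a * u ^ b := by
  rw [← integral_Ioc_eq_integral_Ioo, ← intervalIntegral.integral_of_le ht.le]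
  have hscale := intervalIntegral.smul_integral_comp_mul_left
    (fun s : ℝ => (t - s) ^ a * s ^ b) t (a := 0) (b := 1)
  rw [mul_zero, mul_one] at hscale
  rw [← hscale, smul_eq_mul, ← intervalIntegral.integral_const_mul,
    ← intervalIntegral.integral_const_mul]
  apply intervalIntegral.integral_congr
  intro u hu
  rw [uIcc_of_le zero_le_one] at hu
  beta_reduce
  rw [← mul_one_sub, mul_rpow ht.le (sub_nonneg.2 hu.2), mul_rpow ht.le hu.1,
    rpow_add ht, rpow_add ht, rpow_one]
  ring

lemma intervalIntegrable_one_sub_rpow {a : ℝ} (ha : -1 < a) (x y : ℝ) :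
    IntervalIntegrable (fun u : ℝ => (1 - u) ^ a) volume x y := by
  simpa using (intervalIntegral.intervalIntegrable_rpow' (a := 1 - x) (b := 1 - y) ha).comp_sub_left 1

lemma intervalIntegrable_one_sub_rpow_mul_rpow {a c : ℝ} (ha : -1 < a) (hc : 0 ≤ c) (x y : ℝ) :
    IntervalIntegrable (fun u : ℝ => (1 - u) ^ a * u ^ c) volume x y :=
  (intervalIntegrable_one_sub_rpow ha x y).mul_continuousOn (continuous_rpow_const hc).continuousOn

lemma integral_one_sub_rpow_of_lt_one {p : ℝ} (hp : p < 1) (a : ℝ) :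
    ∫ u in a..1, (1 - u) ^ (-p) = (1 - a) ^ (1 - p) / (1 - p) := by
  rw [intervalIntegral.integral_comp_sub_left (fun v => v ^ (-p)), sub_self,
    integral_rpow (Or.inl (by linarith)), zero_rpow (by linarith)]
  ring_nf

lemma le_integral_one_sub_rpow_mul_rpow {p c a : ℝ} (hp : p < 1) (hc : 0 ≤ c)
    (ha₀ : 0 ≤ a) (ha₁ : a ≤ 1) :
    a ^ c * ((1 - a) ^ (1 - p) / (1 - p)) ≤ ∫ u in (0 : ℝ)..1, (1 - u) ^ (-p) * u ^ c := by
  have hint := intervalIntegrable_one_sub_rpow_mul_rpow (a := -p) (by linarith) hc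
  calc a ^ c * ((1 - a) ^ (1 - p) / (1 - p))
      = ∫ u in a..1, (1 - u) ^ (-p) * a ^ c := by
        rw [intervalIntegral.integral_mul_const, integral_one_sub_rpow_of_lt_one hp a, mul_comm]
    _ ≤ ∫ u in a..1, (1 - u) ^ (-p) * u ^ c := by
        refine intervalIntegral.integral_mono_on ha₁
          ((intervalIntegrable_one_sub_rpow (by linarith) a 1).mul_const _) (hint a 1)
          fun u hu => ?_
        gcongr
        · exact rpow_nonneg (by linarith [hu.2]) _
        · exact hu.1
    _ ≤ ∫ u in (0 : ℝ)..1, (1 - u) ^ (-p) * u ^ c := by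
        refine intervalIntegral.integral_mono_interval ha₀ ha₁ le_rfl ?_ (hint 0 1)
        rw [Filter.EventuallyLE, ae_restrict_iff' measurableSet_Ioc]
        exact Filter.Eventually.of_forall fun u hu =>
          mul_nonneg (rpow_nonneg (by linarith [hu.2]) _) (rpow_nonneg hu.1.le _)

section IterIntegral

variable {α : ℝ}

lemma one_sub_one_div_pos (hα : 1 < α) : 0 < 1 - 1 / α :=
  sub_pos.2 ((div_lt_one (by linarith)).2 hα)

/-- The Beta value `B(1 - 1/α, j (1 - 1/α) + 1)`. -/
noncomputable def betaFactor (α : ℝ) (j : ℕ) : ℝ :=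
  ∫ u in (0 : ℝ)..1, (1 - u) ^ (-(1 / α)) * u ^ ((j : ℝ) * (1 - 1 / α))

lemma iterIntegral_eq_prod_mul_rpow (k : ℕ) {t : ℝ} (ht : 0 < t) :
    iterIntegral α k t =
      (∏ j ∈ Finset.range k, betaFactor α j) * t ^ ((k : ℝ) * (1 - 1 / α)) := by
  induction k generalizing t with
  | zero => simp [iterIntegral]
  | succ k ih =>
    rw [iterIntegral, setIntegral_congr_fun measurableSet_Ioo fun s hs => by
      rw [ih hs.1, mul_left_comm], integral_const_mul, setIntegral_Ioo_sub_rpow_mul_rpow _ _ ht,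
      Finset.prod_range_succ, betaFactor]
    push_cast
    ring_nf

lemma inv_mul_rpow_div_rpow_le_betaFactor (hα : 1 < α) (j : ℕ) :
    (1 - 1 / α)⁻¹ * ((j : ℝ) ^ ((j : ℝ) * (1 - 1 / α)) / ((j : ℝ) + 1) ^ (((j : ℝ) + 1) * (1 - 1 / α)))
      ≤ betaFactor α j := by
  have hβ₀ := one_sub_one_div_pos hα
  set β := 1 - 1 / α with hβ
  have hj₁ : (0 : ℝ) < j + 1 := by positivity
  have ha : (j : ℝ) / (j + 1) ≤ 1 := (div_le_one hj₁).2 (by linarith)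
  rw [betaFactor]
  convert le_integral_one_sub_rpow_mul_rpow (sub_pos.1 hβ₀) (by positivity : 0 ≤ (j : ℝ) * β)
    (by positivity) ha using 1
  rw [← hβ, one_sub_div hj₁.ne', add_sub_cancel_left, div_rpow (by positivity) hj₁.le,
    div_rpow zero_le_one hj₁.le, one_rpow, add_mul, one_mul, rpow_add hj₁]
  field_simp

lemma inv_pow_div_rpow_le_prod_betaFactor (hα : 1 < α) (k : ℕ) :
    (1 - 1 / α)⁻¹ ^ k / (k : ℝ) ^ ((k : ℝ) * (1 - 1 / α)) ≤
      ∏ j ∈ Finset.range k, betaFactor α j := by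
  have hβ₀ := one_sub_one_div_pos hα
  have hfactor := inv_mul_rpow_div_rpow_le_betaFactor hα
  set β := 1 - 1 / α
  clear_value β
  induction k with
  | zero => simp
  | succ k ih =>
    have hk : 0 < (k : ℝ) ^ ((k : ℝ) * β) := by
      rcases k.eq_zero_or_pos with rfl | hk
      · simp
      · exact rpow_pos_of_pos (by exact_mod_cast hk) _
    rw [Finset.prod_range_succ]
    calc β⁻¹ ^ (k + 1) / ((k + 1 : ℕ) : ℝ) ^ (((k + 1 : ℕ) : ℝ) * β)
        = β⁻¹ ^ k / (k : ℝ) ^ ((k : ℝ) * β) *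
          (β⁻¹ * ((k : ℝ) ^ ((k : ℝ) * β) / ((k : ℝ) + 1) ^ (((k : ℝ) + 1) * β))) := by
          push_cast
          generalize (k : ℝ) ^ ((k : ℝ) * β) = g at hk ⊢
          rw [pow_succ]
          field_simp
      _ ≤ _ := mul_le_mul ih (hfactor k) (by positivity) ((by positivity : (0 : ℝ) ≤ _).trans ih)

end IterIntegral

/-- For `α > 1` there is a constant `c₁ > 0` depending only on `α` such that for every
`t > 0` and every integer `k ≥ 1`, the iterated integral is at least
`c₁^k * (t/k)^{k(α-1)/α}`. -/
theorem iterIntegral_lower_bound (α : ℝ) (hα : 1 < α) :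
    ∃ c₁ > 0, ∀ t : ℝ, 0 < t → ∀ k : ℕ, 1 ≤ k →
      c₁ ^ k * (t / (k : ℝ)) ^ ((k : ℝ) * (α - 1) / α) ≤ iterIntegral α k t := by
  have hβ₀ := one_sub_one_div_pos hα
  refine ⟨(1 - 1 / α)⁻¹, inv_pos.2 hβ₀, fun t ht k _ => ?_⟩
  have hexp : (k : ℝ) * (α - 1) / α = k * (1 - 1 / α) := by field_simp
  rw [hexp, div_rpow ht.le k.cast_nonneg, iterIntegral_eq_prod_mul_rpow k ht, ← mul_div_assoc,
    ← div_mul_eq_mul_div]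
  exact mul_le_mul_of_nonneg_right (inv_pow_div_rpow_le_prod_betaFactor hα k) (by positivity)
end

section
/- Let d ≥ 1 be an integer, let α > 0, let β satisfy 0 < β < d, and let c₀ > 0. Let φ : ℝ^d → [0, ∞) be a measurable function satisfying φ(x) ≤ c₀ · min(1, |x|^{−d−α}) for all x ∈ ℝ^d, and define p_t(x, y) := t^{−d/α} φ((x − y) · t^{−1/α}) for t > 0 and x, y ∈ ℝ^d. Assume the Chapman–Kolmogorov identity ∫_{ℝ^d} p_t(x, ω) p_t(ω, y) dω = p_{2t}(x, y) holds for all t > 0 and x, y ∈ ℝ^d. Then there exists a constant c₁ > 0 such that for all t > 0 and all x, y ∈ ℝ^d, ∫_{ℝ^d} ∫_{ℝ^d} p_t(x, ω) p_t(y, z) · |ω − z|^{−β} dω dz ≤ c₁ · t^{−β/α}. -/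
/-! The substitution `z = y - t^{1/α} u` turns `p_t(y, ·)` into `φ` and pulls the factor
`t^{-β/α}` out of the Riesz kernel, so it suffices to bound `∫ φ(u) |u - w|^{-β} du` uniformly
in `w`. Splitting according to whether `|u - w| < 1` bounds it by
`c₀ ∫_{|v| < 1} |v|^{-β} dv + ∫ φ`, which is finite since `β < d` and since the decay
`|x|^{-d-α}` makes `φ` integrable. The outer integral then only contributes the mass `∫ φ`. -/

open MeasureTheory Metric Module Set

variable {E : Type*} [NormedAddCommGroup E] [NormedSpace ℝ E] [FiniteDimensional ℝ E]
  [MeasurableSpace E] [BorelSpace E] {μ : Measure E} [μ.IsAddHaarMeasure]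

theorem integrable_of_norm_le_of_norm_le_mul_rpow_neg {f : E → ℝ} {C r : ℝ}
    (hf : AEStronglyMeasurable f μ) (hr : (finrank ℝ E : ℝ) < r) (h_bdd : ∀ x, ‖f x‖ ≤ C)
    (h_decay : ∀ x, x ≠ 0 → ‖f x‖ ≤ C * ‖x‖ ^ (-r)) : Integrable f μ := by
  have hr0 : 0 ≤ r := (Nat.cast_nonneg _).trans hr.le
  have hC : 0 ≤ C := (norm_nonneg _).trans (h_bdd 0)
  refine ((integrable_one_add_norm hr).const_mul (C * 2 ^ r)).mono' hf (.of_forall fun x => ?_)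
  have hx1 : 0 < 1 + ‖x‖ := by positivity
  rw [mul_assoc, Real.rpow_neg hx1.le, ← div_eq_mul_inv, ← Real.div_rpow zero_le_two hx1.le]
  rcases le_total ‖x‖ 1 with hx | hx
  · calc ‖f x‖ ≤ C := h_bdd x
      _ ≤ C * (2 / (1 + ‖x‖)) ^ r :=
        le_mul_of_one_le_right hC (Real.one_le_rpow (by rw [le_div_iff₀ hx1]; linarith) hr0)
  · have hx0 : 0 < ‖x‖ := by linarith
    calc ‖f x‖ ≤ C * ‖x‖ ^ (-r) := h_decay x (norm_pos_iff.mp hx0)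
      _ = C * ‖x‖⁻¹ ^ r := by rw [Real.rpow_neg hx0.le, Real.inv_rpow hx0.le]
      _ ≤ C * (2 / (1 + ‖x‖)) ^ r := by
        gcongr
        rw [inv_eq_one_div, div_le_div_iff₀ hx0 hx1]
        linarith

theorem integrableOn_ball_norm_rpow_neg {β : ℝ} (hβ0 : 0 ≤ β) (hβd : β < finrank ℝ E) :
    IntegrableOn (fun x : E => ‖x‖ ^ (-β)) (ball 0 1) μ :=
  integrableOn_ball_of_norm_le_rpow (C := 1) (Nat.cast_pos.mp (hβ0.trans_lt hβd)) hβd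
    (.of_forall fun x => by rw [one_mul, Real.norm_of_nonneg (by positivity)])
    (measurable_norm.pow_const _).aestronglyMeasurable

theorem integral_mul_norm_sub_rpow_neg_le {φ : E → ℝ} {c β : ℝ} (hφ : Integrable φ μ)
    (hφ_nonneg : ∀ x, 0 ≤ φ x) (hφ_le : ∀ x, φ x ≤ c) (hβ0 : 0 ≤ β) (hβd : β < finrank ℝ E)
    (w : E) :
    ∫ u, φ u * ‖u - w‖ ^ (-β) ∂μ ≤ c * (∫ v in ball 0 1, ‖v‖ ^ (-β) ∂μ) + ∫ u, φ u ∂μ := by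
  set K := (ball (0 : E) 1).indicator fun v => ‖v‖ ^ (-β) with hK_def
  have hK : Integrable K μ :=
    (integrable_indicator_iff measurableSet_ball).2 (integrableOn_ball_norm_rpow_neg hβ0 hβd)
  have h_pt : ∀ u, φ u * ‖u - w‖ ^ (-β) ≤ c * K (u - w) + φ u := by
    intro u
    by_cases hu : u - w ∈ ball (0 : E) 1
    · have := mul_le_mul_of_nonneg_right (hφ_le u) (by positivity : 0 ≤ ‖u - w‖ ^ (-β))
      rw [hK_def, indicator_of_mem hu]
      linarith [hφ_nonneg u]
    · have h_one : 1 ≤ ‖u - w‖ := by simpa using hu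
      rw [hK_def, indicator_of_notMem hu, mul_zero, zero_add]
      exact mul_le_of_le_one_right (hφ_nonneg u)
        (Real.rpow_le_one_of_one_le_of_nonpos h_one (neg_nonpos.2 hβ0))
  calc ∫ u, φ u * ‖u - w‖ ^ (-β) ∂μ ≤ ∫ u, c * K (u - w) + φ u ∂μ :=
        integral_mono_of_nonneg (.of_forall fun u => mul_nonneg (hφ_nonneg u) (by positivity))
          (((hK.comp_sub_right w).const_mul c).add hφ) (.of_forall h_pt)
    _ = c * (∫ v in ball 0 1, ‖v‖ ^ (-β) ∂μ) + ∫ u, φ u ∂μ := by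
        rw [integral_add ((hK.comp_sub_right w).const_mul c) hφ, integral_const_mul,
          integral_sub_right_eq_self K w, integral_indicator measurableSet_ball]

theorem integral_rpow_neg_finrank_mul_comp_inv_smul_sub_mul {s : ℝ} (hs : 0 < s) (f g : E → ℝ)
    (y : E) :
    ∫ z, s ^ (-(finrank ℝ E : ℝ)) * f (s⁻¹ • (y - z)) * g z ∂μ
      = ∫ u, f u * g (y - s • u) ∂μ := by
  have h := Measure.integral_comp_inv_smul_of_nonneg μ (fun u => f u * g (y - s • u)) hs.le
  simp only [smul_inv_smul₀ hs.ne'] at h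
  rw [← integral_sub_left_eq_self _ μ y]
  simp only [sub_sub_cancel, mul_assoc]
  rw [integral_const_mul, h, smul_eq_mul, ← mul_assoc, Real.rpow_neg hs.le, Real.rpow_natCast,
    inv_mul_cancel₀ (pow_ne_zero _ hs.ne'), one_mul]

theorem integral_rpow_neg_finrank_mul_comp_inv_smul_sub_mul_norm_sub_rpow {s β : ℝ} (hs : 0 < s)
    (f : E → ℝ) (y ω : E) :
    ∫ z, s ^ (-(finrank ℝ E : ℝ)) * f (s⁻¹ • (y - z)) * ‖ω - z‖ ^ (-β) ∂μ
      = s ^ (-β) * ∫ u, f u * ‖u - s⁻¹ • (y - ω)‖ ^ (-β) ∂μ := by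
  rw [integral_rpow_neg_finrank_mul_comp_inv_smul_sub_mul hs, ← integral_const_mul]
  congr 1 with u
  have h_dilate : ω - (y - s • u) = s • (u - s⁻¹ • (y - ω)) := by
    rw [smul_sub, smul_inv_smul₀ hs.ne']
    abel
  rw [h_dilate, norm_smul, Real.norm_of_nonneg hs.le, Real.mul_rpow hs.le (norm_nonneg _)]
  ring

theorem integral_integral_mul_norm_sub_rpow_neg_le {φ : E → ℝ} {c β s : ℝ} (hφ : Integrable φ μ)
    (hφ_nonneg : ∀ x, 0 ≤ φ x) (hφ_le : ∀ x, φ x ≤ c) (hβ0 : 0 ≤ β) (hβd : β < finrank ℝ E)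
    (hs : 0 < s) (x y : E) :
    ∫ ω, ∫ z, (s ^ (-(finrank ℝ E : ℝ)) * φ (s⁻¹ • (x - ω)))
        * (s ^ (-(finrank ℝ E : ℝ)) * φ (s⁻¹ • (y - z))) * ‖ω - z‖ ^ (-β) ∂μ ∂μ
      ≤ (c * (∫ v in ball 0 1, ‖v‖ ^ (-β) ∂μ) + ∫ u, φ u ∂μ) * (∫ u, φ u ∂μ) * s ^ (-β) := by
  set B := c * (∫ v in ball 0 1, ‖v‖ ^ (-β) ∂μ) + ∫ u, φ u ∂μ
  set p : E → E → ℝ := fun x ω => s ^ (-(finrank ℝ E : ℝ)) * φ (s⁻¹ • (x - ω))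
  have hp_nonneg : ∀ ω, 0 ≤ p x ω := fun ω => mul_nonneg (by positivity) (hφ_nonneg _)
  have hp_int : Integrable (p x) μ :=
    ((hφ.comp_smul (inv_ne_zero hs.ne')).comp_sub_left x).const_mul _
  have hp_integral : ∫ ω, p x ω ∂μ = ∫ u, φ u ∂μ := by
    simpa only [Pi.one_apply, mul_one] using
      integral_rpow_neg_finrank_mul_comp_inv_smul_sub_mul (μ := μ) hs φ 1 x
  have h_inner : ∀ ω, ∫ z, p x ω * p y z * ‖ω - z‖ ^ (-β) ∂μ
      = p x ω * (s ^ (-β) * ∫ u, φ u * ‖u - s⁻¹ • (y - ω)‖ ^ (-β) ∂μ) := by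
    intro ω
    rw [← integral_rpow_neg_finrank_mul_comp_inv_smul_sub_mul_norm_sub_rpow hs,
      ← integral_const_mul]
    congr 1 with z
    ring
  calc ∫ ω, ∫ z, p x ω * p y z * ‖ω - z‖ ^ (-β) ∂μ ∂μ
      = ∫ ω, p x ω * (s ^ (-β) * ∫ u, φ u * ‖u - s⁻¹ • (y - ω)‖ ^ (-β) ∂μ) ∂μ := by
        simp only [h_inner]
    _ ≤ ∫ ω, p x ω * (s ^ (-β) * B) ∂μ := by
        refine integral_mono_of_nonneg (.of_forall fun ω => ?_) (hp_int.mul_const _)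
          (.of_forall fun ω => ?_)
        · exact mul_nonneg (hp_nonneg ω) (mul_nonneg (by positivity)
            (integral_nonneg fun u => mul_nonneg (hφ_nonneg u) (by positivity)))
        · exact mul_le_mul_of_nonneg_left (mul_le_mul_of_nonneg_left
            (integral_mul_norm_sub_rpow_neg_le hφ hφ_nonneg hφ_le hβ0 hβd _) (by positivity))
            (hp_nonneg ω)
    _ = B * (∫ u, φ u ∂μ) * s ^ (-β) := by
        rw [integral_mul_const, hp_integral]
        ring

theorem riesz_kernel_double_integral_bound_general (d : ℕ) (α β c₀ : ℝ)
    (hα : 0 < α) (hβ0 : 0 < β) (hβd : β < (d : ℝ)) (hc₀ : 0 < c₀)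
    (φ : EuclideanSpace ℝ (Fin d) → ℝ)
    (hφ_meas : Measurable φ) (hφ_nonneg : ∀ x, 0 ≤ φ x)
    (hφ_bdd : ∀ x, φ x ≤ c₀)
    (hφ_decay : ∀ x : EuclideanSpace ℝ (Fin d), x ≠ 0 → φ x ≤ c₀ * ‖x‖ ^ (-((d : ℝ) + α))) :
    ∃ c₁ > 0, ∀ t : ℝ, 0 < t → ∀ x y : EuclideanSpace ℝ (Fin d),
      (∫ ω : EuclideanSpace ℝ (Fin d), ∫ z : EuclideanSpace ℝ (Fin d),
        (t ^ (-(d : ℝ) / α) * φ ((t ^ (-(1 : ℝ) / α)) • (x - ω))) *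
        (t ^ (-(d : ℝ) / α) * φ ((t ^ (-(1 : ℝ) / α)) • (y - z))) * ‖ω - z‖ ^ (-β))
        ≤ c₁ * t ^ (-β / α) := by
  have hdim : finrank ℝ (EuclideanSpace ℝ (Fin d)) = d := finrank_euclideanSpace_fin
  have hφ_int : Integrable φ :=
    integrable_of_norm_le_of_norm_le_mul_rpow_neg (r := d + α) hφ_meas.aestronglyMeasurable
      (by rw [hdim]; linarith) (fun x => (Real.norm_of_nonneg (hφ_nonneg x)).trans_le (hφ_bdd x))
      (fun x hx => (Real.norm_of_nonneg (hφ_nonneg x)).trans_le (hφ_decay x hx))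
  set B := c₀ * (∫ v in ball (0 : EuclideanSpace ℝ (Fin d)) 1, ‖v‖ ^ (-β)) + ∫ u, φ u
  have hφ_integral_nonneg : 0 ≤ ∫ u, φ u := integral_nonneg hφ_nonneg
  have hB : 0 ≤ B := add_nonneg (mul_nonneg hc₀.le (setIntegral_nonneg measurableSet_ball
    fun v _ => by positivity)) hφ_integral_nonneg
  refine ⟨B * (∫ u, φ u) + 1, by positivity, fun t ht x y => ?_⟩
  set s := t ^ (1 / α)
  have h_mass : t ^ (-(d : ℝ) / α) = s ^ (-(finrank ℝ (EuclideanSpace ℝ (Fin d)) : ℝ)) := by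
    rw [hdim, ← Real.rpow_mul ht.le]; ring_nf
  have h_width : t ^ (-(1 : ℝ) / α) = s⁻¹ := by rw [← Real.rpow_neg ht.le]; ring_nf
  have h_rate : t ^ (-β / α) = s ^ (-β) := by rw [← Real.rpow_mul ht.le]; ring_nf
  rw [h_mass, h_width, h_rate]
  calc _ ≤ B * (∫ u, φ u) * s ^ (-β) :=
        integral_integral_mul_norm_sub_rpow_neg_le hφ_int hφ_nonneg hφ_bdd hβ0.le
          (by rwa [hdim]) (by positivity) x y
    _ ≤ (B * (∫ u, φ u) + 1) * s ^ (-β) :=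
        mul_le_mul_of_nonneg_right (by linarith) (by positivity)

/-- Bound on the double convolution of the scaled heat kernel against the Riesz kernel:
if `φ` is a nonnegative measurable function with `φ x ≤ c₀ * min 1 (|x|^{-d-α})`,
`p_t(x,y) := t^{-d/α} φ((x-y) t^{-1/α})` satisfies Chapman–Kolmogorov, and `0 < β < d`,
then there is `c₁ > 0` such that for all `t > 0` and `x, y ∈ ℝ^d`,
`∫∫ p_t(x,ω) p_t(y,z) |ω - z|^{-β} dω dz ≤ c₁ t^{-β/α}`. -/
theorem riesz_kernel_double_integral_bound (d : ℕ) (hd : 1 ≤ d) (α β c₀ : ℝ)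
    (hα : 0 < α) (hβ0 : 0 < β) (hβd : β < (d : ℝ)) (hc₀ : 0 < c₀)
    (φ : EuclideanSpace ℝ (Fin d) → ℝ)
    (hφ_meas : Measurable φ) (hφ_nonneg : ∀ x, 0 ≤ φ x)
    (hφ_bdd : ∀ x, φ x ≤ c₀)
    (hφ_decay : ∀ x : EuclideanSpace ℝ (Fin d), x ≠ 0 → φ x ≤ c₀ * ‖x‖ ^ (-((d : ℝ) + α)))
    (hCK : ∀ t : ℝ, 0 < t → ∀ x y : EuclideanSpace ℝ (Fin d),
      (∫ ω : EuclideanSpace ℝ (Fin d),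
          (t ^ (-(d : ℝ) / α) * φ ((t ^ (-(1 : ℝ) / α)) • (x - ω))) *
          (t ^ (-(d : ℝ) / α) * φ ((t ^ (-(1 : ℝ) / α)) • (ω - y))))
        = (2 * t) ^ (-(d : ℝ) / α) * φ (((2 * t) ^ (-(1 : ℝ) / α)) • (x - y))) :
    ∃ c₁ > 0, ∀ t : ℝ, 0 < t → ∀ x y : EuclideanSpace ℝ (Fin d),
      (∫ ω : EuclideanSpace ℝ (Fin d), ∫ z : EuclideanSpace ℝ (Fin d),
        (t ^ (-(d : ℝ) / α) * φ ((t ^ (-(1 : ℝ) / α)) • (x - ω))) *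
        (t ^ (-(d : ℝ) / α) * φ ((t ^ (-(1 : ℝ) / α)) • (y - z))) * ‖ω - z‖ ^ (-β))
        ≤ c₁ * t ^ (-β / α) :=
  riesz_kernel_double_integral_bound_general d α β c₀ hα hβ0 hβd hc₀ φ hφ_meas hφ_nonneg hφ_bdd
    hφ_decay
end
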